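/- arXiv:1110.0189 — 2 statements merged into one kernel-verified Lean document; each statement's English description precedes it below -/
import Mathlib

section
/- Define Ψ on words on {1,2} by Ψ(1^{m_0} 2^{n_0} 1^{m_1} 2^{n_1} ⋯ 1^{m_d} 2^{n_d}) = 1^{m_0} 2 1^{m_1−1} 2 ⋯ 2 1^{m_d−1} 2^{n_0−1} 1 2^{n_1−1} ⋯ 2^{n_{d−1}−1} 1 2^{n_d} (this is Φ₁^{-1} restricted to binary words). Then for every word ω on {1,2}, des(ω) = exc(Ψ(ω)). -/
/-- Count the leading letters of a list equal to `a`; return the count and the rest. -/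
def leadCount (a : ℕ) : List ℕ → ℕ × List ℕ
  | [] => (0, [])
  | b :: rest =>
    if b = a then
      let p := leadCount a rest
      (p.1 + 1, p.2)
    else (0, b :: rest)

def blocksAux : ℕ → List ℕ → List (ℕ × ℕ)
  | 0, _ => []
  | _, [] => []
  | fuel + 1, w =>
    let p := leadCount 1 w
    let q := leadCount 2 p.2
    (p.1, q.1) :: blocksAux fuel q.2

/-- The descent-block decomposition `[(m₀,n₀),…,(m_d,n_d)]` of a binary word
`1^{m₀} 2^{n₀} ⋯ 1^{m_d} 2^{n_d}`. -/
def blocks (w : List ℕ) : List (ℕ × ℕ) := blocksAux w.length w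

/-- The word `1^{m₀} 2^{n₀} ⋯ 1^{m_d} 2^{n_d}` determined by blocks. -/
def blockWord (bs : List (ℕ × ℕ)) : List ℕ :=
  bs.flatMap fun p => List.replicate p.1 1 ++ List.replicate p.2 2

/-- `[(m₀,n₀),…,(m_d,n_d)]` is a valid descent-block decomposition:
`m_i > 0` for `1 ≤ i ≤ d` and `n_j > 0` for `0 ≤ j ≤ d-1`. -/
def ValidBlocks (bs : List (ℕ × ℕ)) : Prop :=
  bs ≠ [] ∧ (∀ p ∈ bs.tail, 0 < p.1) ∧ (∀ p ∈ bs.dropLast, 0 < p.2)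

/-- A word on the alphabet {1,2}. -/
def IsBinary (w : List ℕ) : Prop := ∀ a ∈ w, a = 1 ∨ a = 2

/-- The descent number of a word. -/
def des (w : List ℕ) : ℕ := (w.zip w.tail).countP fun p => decide (p.2 < p.1)

/-- The excedance number of a binary word with `k` ones: the number of
positions `i ≤ k` carrying the letter 2. -/
def exc (w : List ℕ) : ℕ := (w.take (w.count 1)).count 2

/-- `Ψ = Φ₁⁻¹` on binary words, via the descent-block decomposition. -/
def psiBlocks (bs : List (ℕ × ℕ)) : List ℕ :=
  List.replicate (bs.headD (0,0)).1 1
    ++ bs.tail.flatMap (fun p => 2 :: List.replicate (p.1 - 1) 1)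
    ++ bs.dropLast.flatMap (fun p => List.replicate (p.2 - 1) 2 ++ [1])
    ++ List.replicate (bs.getLastD (0,0)).2 2

def Psi (w : List ℕ) : List ℕ := psiBlocks (blocks w)

/-- Foata's second fundamental transformation on binary words. -/
def phi2Blocks (bs : List (ℕ × ℕ)) : List ℕ :=
  bs.tail.reverse.flatMap (fun p => List.replicate (p.1 - 1) 1 ++ [2])
    ++ List.replicate (bs.headD (0,0)).1 1
    ++ bs.dropLast.flatMap (fun p => List.replicate (p.2 - 1) 2 ++ [1])
    ++ List.replicate (bs.getLastD (0,0)).2 2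

def Phi2 (w : List ℕ) : List ℕ := phi2Blocks (blocks w)

/-- The extended Steingrímsson map `Γ` on binary words. -/
def gammaBlocks (bs : List (ℕ × ℕ)) : List ℕ :=
  match bs with
  | [] => []
  | [(m0, n0)] => List.replicate m0 1 ++ List.replicate n0 2
  | (m0, n0) :: rest =>
      List.replicate m0 1
        ++ rest.dropLast.flatMap (fun p => 2 :: List.replicate (p.1 - 1) 1)
        ++ (2 :: List.replicate (rest.getLastD (0,0)).1 1)
        ++ (let ns := n0 :: rest.map Prod.snd
            ns.dropLast.dropLast.flatMap (fun nj => List.replicate (nj - 1) 2 ++ [1])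
              ++ List.replicate (ns.dropLast.getLastD 0 - 1 + ns.getLastD 0) 2)

def Gamma (w : List ℕ) : List ℕ := gammaBlocks (blocks w)

/-- The involution `φ` on binary words. -/
def phi (w : List ℕ) : List ℕ :=
  let bs := blocks w
  let ns := bs.map Prod.snd
  let newms : List ℕ :=
    match (bs.map Prod.fst).reverse with
    | [] => []
    | [a] => [a]
    | a :: rest => (a - 1) :: (rest.dropLast ++ [rest.getLastD 0 + 1])
  blockWord (newms.zip ns)

/-- Fibonacci words: binary words with no two consecutive ones. -/
def IsFib (w : List ℕ) : Prop :=
  IsBinary w ∧ w.Chain' fun a b => ¬(a = 1 ∧ b = 1)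

def FibSet (n : ℕ) : Set (List ℕ) := {w | IsFib w ∧ w.length = n}

/-- Fibonacci words of length `n` ending with the letter 1. -/
def FibSet' (n : ℕ) : Set (List ℕ) :=
  {w | IsFib w ∧ w.length = n ∧ w.getLast? = some 1}

/-- Binary words of length `n` with no two consecutive twos. -/
def GSet (n : ℕ) : Set (List ℕ) :=
  {w | IsBinary w ∧ w.length = n ∧ w.Chain' fun a b => ¬(a = 2 ∧ b = 2)}

/-- The word `1^{m₀} 2^{d+n₀-1} 1 2^{n₁-1} ⋯ 1 2^{n_{d-1}-1} 1 2^{n_d}`. -/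
def Rword (m0 : ℕ) (ns : List ℕ) : List ℕ :=
  match ns with
  | [] => List.replicate m0 1
  | [n0] => List.replicate m0 1 ++ List.replicate n0 2
  | n0 :: rest =>
      List.replicate m0 1 ++ List.replicate (rest.length + n0 - 1) 2
        ++ rest.dropLast.flatMap (fun nj => 1 :: List.replicate (nj - 1) 2)
        ++ (1 :: List.replicate (rest.getLastD 0) 2)

def RSet (n : ℕ) : Set (List ℕ) :=
  {w | ∃ m0 ns, m0 ≤ 1 ∧ ns ≠ [] ∧ (∀ j ∈ List.dropLast ns, 1 ≤ j) ∧
        w = Rword m0 ns ∧ w.length = n}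

/-- The Fibonacci word `1^{m₀} 2^{n₀} 1 2^{n₁} ⋯ 1 2^{n_d}`. -/
def Fword (m0 : ℕ) (ns : List ℕ) : List ℕ :=
  List.replicate m0 1 ++ List.replicate (ns.headD 0) 2
    ++ ns.tail.flatMap fun nj => 1 :: List.replicate nj 2

/-!
Write `ω = 1^{m₀} 2^{n₀} ⋯ 1^{m_d} 2^{n_d}`. The descents of `ω` are exactly the `d` junctions
`2^{n_j} 1^{m_{j+1}}`, so `des ω = d`. In `Ψ ω` the `d` ones of the second half
`2^{n₀-1} 1 ⋯ 2^{n_{d-1}-1} 1 2^{n_d}` make up for the `d` letters 2 of the first half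
`1^{m₀} 2 1^{m₁-1} ⋯ 2 1^{m_d-1}`, so that first half is exactly the prefix of `Ψ ω` whose length is
the number of ones; it contains `d` letters 2, hence `exc (Ψ ω) = d`.
-/

lemma des_cons_cons (a b : ℕ) (w : List ℕ) :
    des (a :: b :: w) = des (b :: w) + if b < a then 1 else 0 := by
  simp [des, List.countP_cons]

lemma des_replicate_append_cons_of_le {c x : ℕ} (hcx : c ≤ x) (n : ℕ) (w : List ℕ) :
    des (List.replicate n c ++ x :: w) = des (x :: w) := by
  induction n generalizing x w with
  | zero => rfl
  | succ n ih =>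
    rw [List.replicate_succ', List.append_assoc, List.singleton_append, ih le_rfl,
      des_cons_cons, if_neg (by omega), add_zero]

lemma des_replicate (n c : ℕ) : des (List.replicate n c) = 0 := by
  cases n with
  | zero => rfl
  | succ n => rw [List.replicate_succ', des_replicate_append_cons_of_le le_rfl]; rfl

lemma des_replicate_append_cons_of_lt {c x : ℕ} (hxc : x < c) (n : ℕ) (w : List ℕ) :
    des (List.replicate (n + 1) c ++ x :: w) = des (x :: w) + 1 := by
  rw [List.replicate_succ', List.append_assoc, List.singleton_append,
    des_replicate_append_cons_of_le le_rfl, des_cons_cons, if_pos hxc]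

lemma takeWhile_eq_replicate {α : Type*} [DecidableEq α] (a : α) (l : List α) :
    l.takeWhile (· = a) = List.replicate (l.takeWhile (· = a)).length a :=
  List.eq_replicate_iff.mpr ⟨rfl, fun _ hb => by simpa using List.mem_takeWhile_imp hb⟩

lemma IsBinary.dropWhile {w : List ℕ} (hw : IsBinary w) (p : ℕ → Bool) :
    IsBinary (w.dropWhile p) :=
  fun a ha => hw a ((List.dropWhile_sublist p).mem ha)

def dropFirstBlock (w : List ℕ) : List ℕ := (w.dropWhile (· = 1)).dropWhile (· = 2)

lemma IsBinary.dropFirstBlock {w : List ℕ} (hw : IsBinary w) : IsBinary (dropFirstBlock w) :=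
  (hw.dropWhile _).dropWhile _

lemma length_dropFirstBlock_lt {w : List ℕ} (hw : IsBinary w) (hne : w ≠ []) :
    (dropFirstBlock w).length < w.length := by
  obtain ⟨c, t, rfl⟩ := List.exists_cons_of_ne_nil hne
  rcases hw c List.mem_cons_self with rfl | rfl
  · calc (dropFirstBlock (1 :: t)).length
        ≤ (t.dropWhile (· = 1)).length := by simp [dropFirstBlock, List.length_dropWhile_le]
      _ < (1 :: t).length := by simpa using Nat.lt_succ_of_le (List.length_dropWhile_le _ _)
  · simpa [dropFirstBlock] using Nat.lt_succ_of_le (List.length_dropWhile_le _ _)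

lemma replicate_append_replicate_append_dropFirstBlock (w : List ℕ) :
    List.replicate (w.takeWhile (· = 1)).length 1
      ++ List.replicate ((w.dropWhile (· = 1)).takeWhile (· = 2)).length 2
      ++ dropFirstBlock w = w := by
  rw [← takeWhile_eq_replicate, ← takeWhile_eq_replicate, List.append_assoc, dropFirstBlock,
    List.takeWhile_append_dropWhile, List.takeWhile_append_dropWhile]

lemma leadCount_eq (a : ℕ) (w : List ℕ) :
    leadCount a w = ((w.takeWhile (· = a)).length, w.dropWhile (· = a)) := by
  induction w with
  | nil => rfl
  | cons b w ih => by_cases h : b = a <;> simp [leadCount, h, ih]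

lemma blocksAux_succ_cons (fuel c : ℕ) (t : List ℕ) :
    blocksAux (fuel + 1) (c :: t) =
      (((c :: t).takeWhile (· = 1)).length,
        (((c :: t).dropWhile (· = 1)).takeWhile (· = 2)).length)
        :: blocksAux fuel (dropFirstBlock (c :: t)) := by
  simp [blocksAux, leadCount_eq, dropFirstBlock]

lemma blocksAux_eq_of_length_le {fuel fuel' : ℕ} {w : List ℕ} (hw : IsBinary w)
    (h : w.length ≤ fuel) (h' : w.length ≤ fuel') : blocksAux fuel w = blocksAux fuel' w := by
  induction fuel generalizing fuel' w with
  | zero => cases fuel' <;> simp_all [blocksAux]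
  | succ fuel ih =>
    rcases w with _ | ⟨c, t⟩
    · cases fuel' <;> rfl
    have hlt := length_dropFirstBlock_lt hw (List.cons_ne_nil c t)
    simp only [List.length_cons] at h h' hlt
    obtain ⟨fuel', rfl⟩ : ∃ k, fuel' = k + 1 := ⟨fuel' - 1, by omega⟩
    rw [blocksAux_succ_cons, blocksAux_succ_cons,
      ih (fuel' := fuel') hw.dropFirstBlock (by omega) (by omega)]

lemma blocks_eq_cons {w : List ℕ} (hw : IsBinary w) (hne : w ≠ []) :
    blocks w = ((w.takeWhile (· = 1)).length, ((w.dropWhile (· = 1)).takeWhile (· = 2)).length)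
      :: blocks (dropFirstBlock w) := by
  obtain ⟨c, t, rfl⟩ := List.exists_cons_of_ne_nil hne
  have hlt := length_dropFirstBlock_lt hw (List.cons_ne_nil c t)
  rw [blocks, List.length_cons, blocksAux_succ_cons, blocks,
    blocksAux_eq_of_length_le hw.dropFirstBlock (by rw [List.length_cons] at hlt; omega) le_rfl]

lemma des_eq_zero_of_dropFirstBlock_eq_nil {w : List ℕ} (h : dropFirstBlock w = []) :
    des w = 0 := by
  rw [← replicate_append_replicate_append_dropFirstBlock w, h, List.append_nil]
  cases ((w.dropWhile (· = 1)).takeWhile (· = 2)).length with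
  | zero => rw [List.replicate_zero, List.append_nil, des_replicate]
  | succ b =>
    rw [List.replicate_succ, des_replicate_append_cons_of_le (by norm_num),
      ← List.replicate_succ, des_replicate]

lemma des_eq_des_dropFirstBlock_add_one {w : List ℕ} (hw : IsBinary w)
    (h : dropFirstBlock w ≠ []) : des w = des (dropFirstBlock w) + 1 := by
  obtain ⟨x, r, hxr⟩ := List.exists_cons_of_ne_nil h
  have hdef : (w.dropWhile (· = 1)).dropWhile (· = 2) = dropFirstBlock w := rfl
  have hx1 : x = 1 := by
    have hx2 := List.head?_dropWhile_not (· = 2) (w.dropWhile (· = 1))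
    rw [hdef, hxr] at hx2
    have := hw.dropFirstBlock x (by simp [hxr])
    simp only [List.head?_cons, decide_eq_false_iff_not] at hx2
    omega
  -- the first block ends with a letter 2, otherwise `x` would belong to its 1-run
  obtain ⟨b, hb⟩ : ∃ b, ((w.dropWhile (· = 1)).takeWhile (· = 2)).length = b + 1 := by
    refine Nat.exists_eq_add_one_of_ne_zero fun hb0 => ?_
    have hsplit := List.takeWhile_append_dropWhile (p := (· = 2)) (l := w.dropWhile (· = 1))
    rw [List.length_eq_zero_iff.mp hb0, List.nil_append, hdef, hxr] at hsplit
    have hx1' := List.head?_dropWhile_not (· = 1) w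
    rw [← hsplit] at hx1'
    simp [hx1] at hx1'
  conv_lhs => rw [← replicate_append_replicate_append_dropFirstBlock w]
  rw [hb, hxr, hx1, List.append_assoc, List.replicate_succ, List.cons_append,
    des_replicate_append_cons_of_le (by norm_num), ← List.cons_append, ← List.replicate_succ,
    des_replicate_append_cons_of_lt (by norm_num)]

theorem des_eq_length_blocks_sub_one {w : List ℕ} (hw : IsBinary w) :
    des w = (blocks w).length - 1 := by
  rcases eq_or_ne w [] with rfl | hne
  · rfl
  rw [blocks_eq_cons hw hne, List.length_cons, Nat.add_sub_cancel]
  by_cases h : dropFirstBlock w = []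
  · rw [des_eq_zero_of_dropFirstBlock_eq_nil h, h]
    rfl
  · rw [des_eq_des_dropFirstBlock_add_one hw h, des_eq_length_blocks_sub_one hw.dropFirstBlock,
      blocks_eq_cons hw.dropFirstBlock h, List.length_cons, Nat.add_sub_cancel]
termination_by w.length
decreasing_by exact length_dropFirstBlock_lt hw hne

lemma exc_append_of_count_one_eq_length {u v : List ℕ} (h : (u ++ v).count 1 = u.length) :
    exc (u ++ v) = u.count 2 := by
  rw [exc, h, List.take_left' rfl]

theorem exc_psiBlocks (bs : List (ℕ × ℕ)) : exc (psiBlocks bs) = bs.length - 1 := by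
  rcases bs with _ | ⟨p, t⟩
  · rfl
  set A := List.replicate p.1 1
  set B := t.flatMap fun q => 2 :: List.replicate (q.1 - 1) 1
  set C := (p :: t).dropLast.flatMap fun q => List.replicate (q.2 - 1) 2 ++ [1]
  set D := List.replicate ((p :: t).getLastD (0, 0)).2 2
  have hpsi : psiBlocks (p :: t) = (A ++ B) ++ (C ++ D) := by
    simp only [psiBlocks, List.headD_cons, List.tail_cons, List.append_assoc, A, B, C, D]
  have hB1 : B.count 1 + t.length = B.length := by
    simp [B, List.count_flatMap, Function.comp_def, List.length_flatMap, List.sum_map_add]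
  have hB2 : B.count 2 = t.length := by
    simp [B, List.count_flatMap, Function.comp_def, List.count_replicate]
  have hC1 : C.count 1 = (p :: t).dropLast.length := by
    simp [C, List.count_flatMap, Function.comp_def, List.count_replicate]
  have hcount : ((A ++ B) ++ (C ++ D)).count 1 = (A ++ B).length := by
    simp only [List.count_append, List.count_replicate, hC1, A, D,
      List.length_dropLast, List.length_cons, List.length_append, List.length_replicate,
      Nat.reduceBEq, Bool.false_eq_true, if_false, if_true]
    omega
  rw [hpsi, exc_append_of_count_one_eq_length hcount, List.count_append, hB2, List.length_cons,
    Nat.add_sub_cancel]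
  simp [A, List.count_replicate]

theorem stmt_4 (w : List ℕ) (hw : IsBinary w) :
    des w = exc (Psi w) := by
  rw [Psi, exc_psiBlocks, des_eq_length_blocks_sub_one hw]
end

section
/- The map Ψ defined by Ψ(1^{m_0} 2^{n_0} ⋯ 1^{m_d} 2^{n_d}) = 1^{m_0} 2 1^{m_1−1} 2 ⋯ 2 1^{m_d−1} 2^{n_0−1} 1 2^{n_1−1} ⋯ 2^{n_{d−1}−1} 1 2^{n_d} is a bijection from the set of binary words of length n with k ones to itself, for every n and k. -/
/-!
The first `k` letters of `Ψ(1^{m₀} 2^{n₀} ⋯ 1^{m_d} 2^{n_d})` are `1^{m₀} 2 1^{m₁-1} ⋯ 2 1^{m_d-1}`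
and the remaining ones are `2^{n₀-1} 1 ⋯ 2^{n_{d-1}-1} 1 2^{n_d}`. Hence `Ψ` keeps the length and
the number of ones, and since `m_i, n_j > 0` in the descent-block decomposition, splitting the two
parts at the letter `2`, resp. `1`, recovers all `m_i` and `n_j`. So `Ψ` is injective on binary
words, and an injective self-map of the finite set of binary words of length `n` with `k` ones is
a bijection.
-/

open List

section RunLengths

variable {α : Type*}

theorem List.intercalate_singleton_cons (s : α) (u : List α) (ls : List (List α)) :
    [s].intercalate (u :: ls) = u ++ ls.flatMap (s :: ·) := by
  induction ls generalizing u with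
  | nil => simp
  | cons v ls ih => simp [ih]

theorem List.intercalate_singleton_append (s : α) (ls : List (List α)) (v : List α) :
    [s].intercalate (ls ++ [v]) = ls.flatMap (· ++ [s]) ++ v := by
  induction ls with
  | nil => simp
  | cons u ls ih => rw [cons_append, intercalate_cons_of_ne_nil (by simp), ih]; simp

theorem injOn_intercalate_map_replicate [DecidableEq α] {a b : α} (hab : a ≠ b) :
    Set.InjOn (fun rs : List ℕ => [b].intercalate (rs.map (replicate · a))) {rs | rs ≠ []} := by
  intro r₁ h₁ r₂ h₂ h
  have splitOn_eq : ∀ rs : List ℕ, rs ≠ [] →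
      ([b].intercalate (rs.map (replicate · a))).splitOn b = rs.map (replicate · a) :=
    fun rs hrs => splitOn_intercalate b (by simp [mem_replicate, hab.symm]) (by simpa using hrs)
  have hsplit := congrArg (·.splitOn b) h
  simp only [splitOn_eq r₁ h₁, splitOn_eq r₂ h₂] at hsplit
  exact map_injective_iff.mpr (replicate_left_injective a) hsplit

theorem injOn_map_sub_one : Set.InjOn (map (· - 1)) {l : List ℕ | ∀ a ∈ l, 0 < a} := by
  have inverse : ∀ l : List ℕ, (∀ a ∈ l, 0 < a) → (l.map (· - 1)).map (· + 1) = l := by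
    intro l hl
    rw [map_map]
    exact (map_congr_left fun a ha => Nat.sub_add_cancel (hl a ha)).trans (map_id l)
  intro l₁ h₁ l₂ h₂ h
  rw [← inverse l₁ h₁, ← inverse l₂ h₂, h]

theorem sum_map_sub_one_add_length {l : List ℕ} (hl : ∀ a ∈ l, 0 < a) :
    (l.map (· - 1)).sum + l.length = l.sum := by
  induction l with
  | nil => simp
  | cons a l ih =>
    have ha := hl a (by simp)
    have ih := ih fun b hb => hl b (by simp [hb])
    simp only [map_cons, sum_cons, length_cons]
    omega

theorem map_eq_cons_headD_tail {β : Type*} (f : α → β) {l : List α} (hl : l ≠ []) (d : α) :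
    l.map f = f (l.headD d) :: l.tail.map f := by
  cases l with
  | nil => exact absurd rfl hl
  | cons a l => rfl

theorem map_eq_dropLast_append_getLastD {β : Type*} (f : α → β) {l : List α} (hl : l ≠ [])
    (d : α) : l.map f = l.dropLast.map f ++ [f (l.getLastD d)] := by
  conv_lhs => rw [← dropLast_append_getLast hl]
  simp [getLastD_eq_getLast?, getLast?_eq_some_getLast hl]

end RunLengths

theorem finite_setOf_length_eq_forall_mem {α : Type*} {s : Set α} (hs : s.Finite) (n : ℕ) :
    {l : List α | l.length = n ∧ ∀ a ∈ l, a ∈ s}.Finite := by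
  have : Finite s := hs
  refine ((List.finite_length_eq s n).image (map Subtype.val)).subset ?_
  rintro l ⟨hlen, hl⟩
  lift l to List s using hl
  exact ⟨l, by simpa using hlen, rfl⟩

theorem replicate_leadCount_append (a : ℕ) (l : List ℕ) :
    replicate (leadCount a l).1 a ++ (leadCount a l).2 = l := by
  induction l with
  | nil => rfl
  | cons b l ih =>
    by_cases h : b = a
    · subst h
      simp only [leadCount, if_true, replicate_succ, cons_append, ih]
    · simp [leadCount, h]

theorem head?_leadCount_snd_ne (a : ℕ) (l : List ℕ) : (leadCount a l).2.head? ≠ some a := by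
  induction l with
  | nil => simp [leadCount]
  | cons b l ih =>
    by_cases h : b = a
    · simpa [leadCount, h] using ih
    · simp [leadCount, h]

theorem IsBinary.of_append_right {u v : List ℕ} (h : IsBinary (u ++ v)) : IsBinary v :=
  fun a ha => h a (mem_append_right u ha)

theorem IsBinary.eq_nil_of_head? {w : List ℕ} (hw : IsBinary w) (h₁ : w.head? ≠ some 1)
    (h₂ : w.head? ≠ some 2) : w = [] := by
  cases w with
  | nil => rfl
  | cons a w => rcases hw a mem_cons_self with rfl | rfl <;> simp at h₁ h₂

theorem blocksAux_nil (fuel : ℕ) : blocksAux fuel [] = [] := by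
  cases fuel <;> rfl

theorem blocksAux_succ {w r s : List ℕ} {m n : ℕ} (fuel : ℕ) (hw : w ≠ [])
    (hm : leadCount 1 w = (m, r)) (hn : leadCount 2 r = (n, s)) :
    blocksAux (fuel + 1) w = (m, n) :: blocksAux fuel s := by
  cases w with
  | nil => exact absurd rfl hw
  | cons a w => simp only [blocksAux, hm, hn]

theorem IsBinary.leadCount_leadCount_spec {w r s : List ℕ} {m n : ℕ} (hw : IsBinary w)
    (hm : leadCount 1 w = (m, r)) (hn : leadCount 2 r = (n, s)) :
    w = replicate m 1 ++ replicate n 2 ++ s ∧ IsBinary s ∧ s.head? ≠ some 2 ∧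
      (s ≠ [] → 0 < n) ∧ (m = 0 → w.head? ≠ some 1) ∧ (w ≠ [] → s.length < w.length) := by
  have hr₁ : r.head? ≠ some 1 := by simpa [hm] using head?_leadCount_snd_ne 1 w
  have hs₂ : s.head? ≠ some 2 := by simpa [hn] using head?_leadCount_snd_ne 2 r
  have hwr : w = replicate m 1 ++ r := by simpa [hm] using (replicate_leadCount_append 1 w).symm
  have hrs : r = replicate n 2 ++ s := by simpa [hn] using (replicate_leadCount_append 2 r).symm
  have hw_eq : w = replicate m 1 ++ replicate n 2 ++ s := by rw [hwr, hrs, append_assoc]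
  have hs : IsBinary s := (hw_eq ▸ hw).of_append_right
  have hs_of_n : n = 0 → s = r := by rintro rfl; simp [hrs]
  refine ⟨hw_eq, hs, hs₂, fun hne => ?_, fun hm0 => ?_, fun hne => ?_⟩
  · by_contra hn0
    exact hne (hs.eq_nil_of_head? (hs_of_n (by omega) ▸ hr₁) hs₂)
  · simpa [hwr, hm0] using hr₁
  · have hlen : w.length = m + n + s.length := by simp [hw_eq]; omega
    by_contra hlt
    have hm0 : m = 0 := by omega
    have hn0 : n = 0 := by omega
    refine hne (hw.eq_nil_of_head? (by simpa [hwr, hm0] using hr₁) ?_)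
    simpa [hwr, hrs, hm0, hn0] using hs₂

theorem blockWord_cons (p : ℕ × ℕ) (bs : List (ℕ × ℕ)) :
    blockWord (p :: bs) = replicate p.1 1 ++ replicate p.2 2 ++ blockWord bs := by
  simp [blockWord]

theorem blockWord_blocksAux {fuel : ℕ} {w : List ℕ} (hw : IsBinary w) (hlen : w.length ≤ fuel) :
    blockWord (blocksAux fuel w) = w := by
  induction fuel generalizing w with
  | zero => simp_all [blocksAux_nil, blockWord]
  | succ fuel ih =>
    rcases eq_or_ne w [] with rfl | hne
    · rfl
    rcases hm : leadCount 1 w with ⟨m, r⟩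
    rcases hn : leadCount 2 r with ⟨n, s⟩
    obtain ⟨hw_eq, hs, -, -, -, hlt⟩ := hw.leadCount_leadCount_spec hm hn
    rw [blocksAux_succ fuel hne hm hn, blockWord_cons, ih hs (by have := hlt hne; omega), hw_eq]

theorem fst_pos_of_mem_blocksAux {fuel : ℕ} {w : List ℕ} (hw : IsBinary w)
    (hw₂ : w.head? ≠ some 2) : ∀ p ∈ blocksAux fuel w, 0 < p.1 := by
  induction fuel generalizing w with
  | zero => simp [blocksAux]
  | succ fuel ih =>
    rcases eq_or_ne w [] with rfl | hne
    · simp [blocksAux_nil]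
    rcases hm : leadCount 1 w with ⟨m, r⟩
    rcases hn : leadCount 2 r with ⟨n, s⟩
    obtain ⟨-, hs, hs₂, -, hw₁, -⟩ := hw.leadCount_leadCount_spec hm hn
    rw [blocksAux_succ fuel hne hm hn, forall_mem_cons]
    exact ⟨Nat.pos_of_ne_zero fun hm0 => hne (hw.eq_nil_of_head? (hw₁ hm0) hw₂), ih hs hs₂⟩

theorem snd_pos_of_mem_dropLast_blocksAux {fuel : ℕ} {w : List ℕ} (hw : IsBinary w) :
    ∀ p ∈ (blocksAux fuel w).dropLast, 0 < p.2 := by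
  induction fuel generalizing w with
  | zero => simp [blocksAux]
  | succ fuel ih =>
    rcases eq_or_ne w [] with rfl | hne
    · simp [blocksAux_nil]
    rcases hm : leadCount 1 w with ⟨m, r⟩
    rcases hn : leadCount 2 r with ⟨n, s⟩
    obtain ⟨-, hs, -, hn_pos, -, -⟩ := hw.leadCount_leadCount_spec hm hn
    rw [blocksAux_succ fuel hne hm hn]
    rcases hrest : blocksAux fuel s with _ | ⟨q, bs⟩
    · simp
    have hs_ne : s ≠ [] := by rintro rfl; simp [blocksAux_nil] at hrest
    rw [dropLast_cons_cons, forall_mem_cons, ← hrest]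
    exact ⟨hn_pos hs_ne, ih hs⟩

theorem IsBinary.blockWord_blocks {w : List ℕ} (hw : IsBinary w) : blockWord (blocks w) = w :=
  blockWord_blocksAux hw le_rfl

theorem IsBinary.validBlocks_blocks {w : List ℕ} (hw : IsBinary w) (hne : w ≠ []) :
    ValidBlocks (blocks w) := by
  obtain ⟨fuel, hfuel⟩ := Nat.exists_eq_succ_of_ne_zero (length_pos_iff.mpr hne).ne'
  rcases hm : leadCount 1 w with ⟨m, r⟩
  rcases hn : leadCount 2 r with ⟨n, s⟩
  obtain ⟨-, hs, hs₂, -, -, -⟩ := hw.leadCount_leadCount_spec hm hn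
  have hblocks : blocks w = (m, n) :: blocksAux fuel s := by
    rw [blocks, hfuel, blocksAux_succ fuel hne hm hn]
  refine ⟨by simp [hblocks], ?_, snd_pos_of_mem_dropLast_blocksAux hw⟩
  rw [hblocks, tail_cons]
  exact fst_pos_of_mem_blocksAux hs hs₂

section PsiHalves

def psiPrefix (m₀ : ℕ) (ms : List ℕ) : List ℕ :=
  replicate m₀ 1 ++ ms.flatMap fun m => 2 :: replicate (m - 1) 1

def psiSuffix (ns : List ℕ) (n_d : ℕ) : List ℕ :=
  (ns.flatMap fun n => replicate (n - 1) 2 ++ [1]) ++ replicate n_d 2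

theorem psiBlocks_eq_psiPrefix_append_psiSuffix (bs : List (ℕ × ℕ)) :
    psiBlocks bs = psiPrefix (bs.headD (0, 0)).1 (bs.tail.map Prod.fst)
      ++ psiSuffix (bs.dropLast.map Prod.snd) (bs.getLastD (0, 0)).2 := by
  simp only [psiBlocks, psiPrefix, psiSuffix, flatMap_map, append_assoc]

theorem psiPrefix_eq_intercalate (m₀ : ℕ) (ms : List ℕ) :
    psiPrefix m₀ ms = [2].intercalate ((m₀ :: ms.map (· - 1)).map (replicate · 1)) := by
  simp [psiPrefix, intercalate_singleton_cons, flatMap_map]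

theorem psiSuffix_eq_intercalate (ns : List ℕ) (n_d : ℕ) :
    psiSuffix ns n_d = [1].intercalate ((ns.map (· - 1) ++ [n_d]).map (replicate · 2)) := by
  simp [psiSuffix, intercalate_singleton_append, flatMap_map]

variable {m₀ m₀' n_d n_d' : ℕ} {ms ms' ns ns' : List ℕ}

theorem psiPrefix_inj (hms : ∀ m ∈ ms, 0 < m) (hms' : ∀ m ∈ ms', 0 < m)
    (h : psiPrefix m₀ ms = psiPrefix m₀' ms') : m₀ = m₀' ∧ ms = ms' := by
  rw [psiPrefix_eq_intercalate, psiPrefix_eq_intercalate] at h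
  obtain ⟨rfl, hruns⟩ := cons.inj <| injOn_intercalate_map_replicate (by decide)
    (cons_ne_nil m₀ (ms.map (· - 1))) (cons_ne_nil m₀' (ms'.map (· - 1))) h
  exact ⟨rfl, injOn_map_sub_one hms hms' hruns⟩

theorem psiSuffix_inj (hns : ∀ n ∈ ns, 0 < n) (hns' : ∀ n ∈ ns', 0 < n)
    (h : psiSuffix ns n_d = psiSuffix ns' n_d') : ns = ns' ∧ n_d = n_d' := by
  rw [psiSuffix_eq_intercalate, psiSuffix_eq_intercalate] at h
  obtain ⟨hruns, hlast⟩ := append_inj'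
    (injOn_intercalate_map_replicate (by decide) (by simp) (by simp) h) rfl
  exact ⟨injOn_map_sub_one hns hns' hruns, by simpa using hlast⟩

theorem length_psiPrefix (hms : ∀ m ∈ ms, 0 < m) : (psiPrefix m₀ ms).length = m₀ + ms.sum := by
  simpa [psiPrefix, length_flatMap, add_assoc] using sum_map_sub_one_add_length hms

theorem count_one_psiPrefix_add_length (hms : ∀ m ∈ ms, 0 < m) :
    (psiPrefix m₀ ms).count 1 + ms.length = m₀ + ms.sum := by
  simpa [psiPrefix, count_flatMap, Function.comp_def, count_replicate, add_assoc]
    using sum_map_sub_one_add_length hms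

theorem length_psiSuffix (hns : ∀ n ∈ ns, 0 < n) : (psiSuffix ns n_d).length = ns.sum + n_d := by
  simpa [psiSuffix, length_flatMap] using sum_map_sub_one_add_length hns

theorem count_one_psiSuffix : (psiSuffix ns n_d).count 1 = ns.length := by
  simp [psiSuffix, count_flatMap, Function.comp_def, count_replicate]

end PsiHalves

theorem isBinary_psiBlocks (bs : List (ℕ × ℕ)) : IsBinary (psiBlocks bs) := by
  intro a ha
  simp only [psiBlocks, mem_append, mem_flatMap, mem_cons, mem_replicate] at ha
  grind

theorem count_one_blockWord (bs : List (ℕ × ℕ)) :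
    (blockWord bs).count 1 = (bs.map Prod.fst).sum := by
  simp [blockWord, count_flatMap, Function.comp_def, count_replicate]

theorem length_blockWord (bs : List (ℕ × ℕ)) :
    (blockWord bs).length = (bs.map Prod.fst).sum + (bs.map Prod.snd).sum := by
  simp [blockWord, length_flatMap, sum_map_add]

namespace ValidBlocks

variable {bs : List (ℕ × ℕ)}

theorem pos_of_mem_map_fst_tail (hv : ValidBlocks bs) : ∀ m ∈ bs.tail.map Prod.fst, 0 < m :=
  forall_mem_map.mpr hv.2.1

theorem pos_of_mem_map_snd_dropLast (hv : ValidBlocks bs) :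
    ∀ n ∈ bs.dropLast.map Prod.snd, 0 < n :=
  forall_mem_map.mpr hv.2.2

theorem count_one_psiBlocks (hv : ValidBlocks bs) :
    (psiBlocks bs).count 1 = (blockWord bs).count 1 := by
  have hpre := count_one_psiPrefix_add_length (m₀ := (bs.headD (0, 0)).1)
    hv.pos_of_mem_map_fst_tail
  rw [length_map, length_tail] at hpre
  rw [psiBlocks_eq_psiPrefix_append_psiSuffix, count_append, count_one_psiSuffix,
    count_one_blockWord, map_eq_cons_headD_tail Prod.fst hv.1 (0, 0), sum_cons, length_map,
    length_dropLast]
  omega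

theorem length_psiPrefix_eq_count_one (hv : ValidBlocks bs) :
    (psiPrefix (bs.headD (0, 0)).1 (bs.tail.map Prod.fst)).length = (psiBlocks bs).count 1 := by
  rw [length_psiPrefix hv.pos_of_mem_map_fst_tail, hv.count_one_psiBlocks, count_one_blockWord,
    map_eq_cons_headD_tail Prod.fst hv.1 (0, 0), sum_cons]

theorem length_psiBlocks (hv : ValidBlocks bs) :
    (psiBlocks bs).length = (blockWord bs).length := by
  rw [psiBlocks_eq_psiPrefix_append_psiSuffix, length_append,
    length_psiPrefix hv.pos_of_mem_map_fst_tail, length_psiSuffix hv.pos_of_mem_map_snd_dropLast,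
    length_blockWord, map_eq_cons_headD_tail Prod.fst hv.1 (0, 0),
    map_eq_dropLast_append_getLastD Prod.snd hv.1 (0, 0), sum_cons, sum_append, sum_singleton]

end ValidBlocks

theorem injOn_psiBlocks : Set.InjOn psiBlocks {bs | ValidBlocks bs} := by
  intro bs hbs cs hcs h
  have hsplit := h
  rw [psiBlocks_eq_psiPrefix_append_psiSuffix, psiBlocks_eq_psiPrefix_append_psiSuffix] at hsplit
  obtain ⟨hpre, hsuf⟩ := append_inj hsplit (by
    rw [hbs.length_psiPrefix_eq_count_one, hcs.length_psiPrefix_eq_count_one, h])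
  obtain ⟨hhead, htail⟩ :=
    psiPrefix_inj hbs.pos_of_mem_map_fst_tail hcs.pos_of_mem_map_fst_tail hpre
  obtain ⟨hdropLast, hlast⟩ :=
    psiSuffix_inj hbs.pos_of_mem_map_snd_dropLast hcs.pos_of_mem_map_snd_dropLast hsuf
  have hfst : bs.map Prod.fst = cs.map Prod.fst := by
    rw [map_eq_cons_headD_tail Prod.fst hbs.1 (0, 0), map_eq_cons_headD_tail Prod.fst hcs.1 (0, 0),
      hhead, htail]
  have hsnd : bs.map Prod.snd = cs.map Prod.snd := by
    rw [map_eq_dropLast_append_getLastD Prod.snd hbs.1 (0, 0),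
      map_eq_dropLast_append_getLastD Prod.snd hcs.1 (0, 0), hdropLast, hlast]
  exact (zip_of_prod hfst hsnd).trans (zip_of_prod rfl rfl).symm

theorem IsBinary.length_Psi {w : List ℕ} (hw : IsBinary w) : (Psi w).length = w.length := by
  rcases eq_or_ne w [] with rfl | hne
  · rfl
  rw [Psi, (hw.validBlocks_blocks hne).length_psiBlocks, hw.blockWord_blocks]

theorem IsBinary.count_one_Psi {w : List ℕ} (hw : IsBinary w) : (Psi w).count 1 = w.count 1 := by
  rcases eq_or_ne w [] with rfl | hne
  · rfl
  rw [Psi, (hw.validBlocks_blocks hne).count_one_psiBlocks, hw.blockWord_blocks]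

theorem injOn_Psi : Set.InjOn Psi {w | IsBinary w} := by
  intro w₁ hw₁ w₂ hw₂ h
  have hlen : w₁.length = w₂.length := by rw [← hw₁.length_Psi, h, hw₂.length_Psi]
  rcases eq_or_ne w₁ [] with rfl | hne₁
  · exact (length_eq_zero_iff.mp hlen.symm).symm
  have hne₂ : w₂ ≠ [] := by rintro rfl; exact hne₁ (length_eq_zero_iff.mp hlen)
  rw [← hw₁.blockWord_blocks, ← hw₂.blockWord_blocks,
    injOn_psiBlocks (hw₁.validBlocks_blocks hne₁) (hw₂.validBlocks_blocks hne₂) h]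

theorem stmt_5 (n k : ℕ) :
    Set.BijOn Psi {w | IsBinary w ∧ w.length = n ∧ w.count 1 = k}
      {w | IsBinary w ∧ w.length = n ∧ w.count 1 = k} := by
  have hfinite : {w | IsBinary w ∧ w.length = n ∧ w.count 1 = k}.Finite :=
    (finite_setOf_length_eq_forall_mem (Set.toFinite {1, 2}) n).subset
      fun w ⟨hw, hlen, _⟩ => ⟨hlen, hw⟩
  have hmaps : Set.MapsTo Psi {w | IsBinary w ∧ w.length = n ∧ w.count 1 = k}
      {w | IsBinary w ∧ w.length = n ∧ w.count 1 = k} := fun w ⟨hw, hlen, hk⟩ =>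
    ⟨isBinary_psiBlocks _, hw.length_Psi.trans hlen, hw.count_one_Psi.trans hk⟩
  exact (hfinite.injOn_iff_bijOn_of_mapsTo hmaps).mp (injOn_Psi.mono fun w hw => hw.1)
end
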